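/- Let V and W be two k-dimensional linear subspaces of R^d with angle θ = ∠(V,W) < π/2. Then for every orthonormal basis {v_1,…,v_k} of V there exists an orthonormal basis {w_1,…,w_k} of W such that ∠(v_i, w_i) ≤ θ for all i ∈ [1,k], and for all i,j ∈ [1,k], the angle ∠(v_i, w_j − v_j) lies in the interval [(π−θ)/2, (π+θ)/2]. -/

import Mathlib

open Set Real

open Set Real Matrix InnerProductGeometry
open scoped RealInnerProductSpace

section helpers
variable {k d : ℕ}

lemma entry_eq (N : Matrix (Fin k) (Fin k) ℝ) (i j : Fin k) :
    (Pi.single i 1 : Fin k → ℝ) ⬝ᵥ N *ᵥ (Pi.single j 1 : Fin k → ℝ) = N i j := by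
  simp [dotProduct, mulVec, Pi.single_apply]

lemma single_self (i : Fin k) :
    (Pi.single i 1 : Fin k → ℝ) ⬝ᵥ (Pi.single i 1 : Fin k → ℝ) = 1 := by
  simp [dotProduct, Pi.single_apply]

lemma psd_entry_sq_le (N : Matrix (Fin k) (Fin k) ℝ)
    (hpos : ∀ x : Fin k → ℝ, 0 ≤ x ⬝ᵥ N *ᵥ x) (hsym : Nᵀ = N) (i j : Fin k) :
    N i j ^ 2 ≤ N i i * N j j := by
  have hji : N j i = N i j := by
    have := congrFun (congrFun hsym j) i; simpa [Matrix.transpose_apply] using this.symm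
  have h : ∀ t : ℝ, 0 ≤ N i i * (t * t) + (2 * N i j) * t + N j j := by
    intro t
    have h0 := hpos (t • (Pi.single i 1 : Fin k → ℝ) + (Pi.single j 1 : Fin k → ℝ))
    have e : (t • (Pi.single i 1 : Fin k → ℝ) + (Pi.single j 1 : Fin k → ℝ)) ⬝ᵥ
        N *ᵥ (t • (Pi.single i 1 : Fin k → ℝ) + (Pi.single j 1 : Fin k → ℝ))
        = N i i * (t * t) + (2 * N i j) * t + N j j := by
      simp only [mulVec_add, mulVec_smul, dotProduct_add, add_dotProduct,
        smul_dotProduct, dotProduct_smul, smul_eq_mul, entry_eq N i j, entry_eq N j i,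
        entry_eq N i i, entry_eq N j j, hji]
      ring
    rw [e] at h0; exact h0
  have hd := discrim_le_zero h
  unfold discrim at hd
  nlinarith [hd]

lemma diag_form (dg : Fin k → ℝ) (y : Fin k → ℝ) :
    y ⬝ᵥ (diagonal dg) *ᵥ y = ∑ i, dg i * (y i * y i) := by
  simp [dotProduct, mulVec_diagonal]
  exact Finset.sum_congr rfl fun i _ => by ring

lemma sqrt_matrix (A : Matrix (Fin k) (Fin k) ℝ) (hA : A.IsHermitian) (c : ℝ)
    (hc : 0 ≤ c)
    (hlow : ∀ x : Fin k → ℝ, c ^ 2 * (x ⬝ᵥ x) ≤ x ⬝ᵥ A *ᵥ x)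
    (hup : ∀ x : Fin k → ℝ, x ⬝ᵥ A *ᵥ x ≤ x ⬝ᵥ x) :
    ∃ S : Matrix (Fin k) (Fin k) ℝ, Sᵀ = S ∧ S * S = A ∧
      (∀ x : Fin k → ℝ, c * (x ⬝ᵥ x) ≤ x ⬝ᵥ S *ᵥ x) ∧
      (∀ x : Fin k → ℝ, x ⬝ᵥ S *ᵥ x ≤ x ⬝ᵥ x) := by
  set U : Matrix (Fin k) (Fin k) ℝ := (hA.eigenvectorUnitary : Matrix (Fin k) (Fin k) ℝ) with hU
  set μ : Fin k → ℝ := hA.eigenvalues with hμ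
  have hUU : Uᵀ * U = 1 := by
    have := Matrix.mem_unitaryGroup_iff'.mp hA.eigenvectorUnitary.2
    simpa [star_eq_conjTranspose, conjTranspose_eq_transpose_of_trivial] using this
  have hUU' : U * Uᵀ = 1 := mul_eq_one_comm.mp hUU
  have hspec : A = U * diagonal μ * Uᵀ := by
    have := hA.spectral_theorem
    simpa [star_eq_conjTranspose, conjTranspose_eq_transpose_of_trivial, Function.comp] using this
  have hform : ∀ (M : Matrix (Fin k) (Fin k) ℝ) (x : Fin k → ℝ),
      x ⬝ᵥ (U * M * Uᵀ) *ᵥ x = (Uᵀ *ᵥ x) ⬝ᵥ M *ᵥ (Uᵀ *ᵥ x) := by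
    intro M x
    rw [← mulVec_mulVec, ← mulVec_mulVec, dotProduct_mulVec, ← mulVec_transpose]
  have hxx : ∀ x : Fin k → ℝ, x ⬝ᵥ x = (Uᵀ *ᵥ x) ⬝ᵥ (Uᵀ *ᵥ x) := by
    intro x
    have h1 := hform 1 x
    rw [mul_one, hUU', one_mulVec] at h1
    simpa using h1
  have hAform : ∀ x : Fin k → ℝ, x ⬝ᵥ A *ᵥ x = ∑ i, μ i * ((Uᵀ *ᵥ x) i * (Uᵀ *ᵥ x) i) := by
    intro x
    rw [hspec, hform, diag_form]
  have hsingle : ∀ i : Fin k, Uᵀ *ᵥ (U *ᵥ (Pi.single i 1 : Fin k → ℝ)) = Pi.single i 1 := by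
    intro i
    rw [mulVec_mulVec, hUU, one_mulVec]
  have hμup : ∀ i, μ i ≤ 1 := by
    intro i
    have h1 := hup (U *ᵥ (Pi.single i 1 : Fin k → ℝ))
    rw [hAform, hsingle, hxx (U *ᵥ (Pi.single i 1 : Fin k → ℝ)), hsingle, single_self] at h1
    simpa [Pi.single_apply, Finset.sum_ite_eq] using h1
  have hμlow : ∀ i, c ^ 2 ≤ μ i := by
    intro i
    have h1 := hlow (U *ᵥ (Pi.single i 1 : Fin k → ℝ))
    rw [hAform, hsingle, hxx (U *ᵥ (Pi.single i 1 : Fin k → ℝ)), hsingle, single_self] at h1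
    simpa [Pi.single_apply, Finset.sum_ite_eq] using h1
  have hμ0 : ∀ i, 0 ≤ μ i := fun i => le_trans (sq_nonneg c) (hμlow i)
  refine ⟨U * diagonal (fun i => Real.sqrt (μ i)) * Uᵀ, ?_, ?_, ?_, ?_⟩
  · rw [transpose_mul, transpose_mul, transpose_transpose, diagonal_transpose, mul_assoc]
  · calc (U * diagonal (fun i => Real.sqrt (μ i)) * Uᵀ) * (U * diagonal (fun i => Real.sqrt (μ i)) * Uᵀ)
        = U * (diagonal (fun i => Real.sqrt (μ i)) * (Uᵀ * U) * diagonal (fun i => Real.sqrt (μ i))) * Uᵀ := by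
          simp only [Matrix.mul_assoc]
      _ = U * diagonal μ * Uᵀ := by
          rw [hUU, mul_one, diagonal_mul_diagonal]
          have : (fun i => Real.sqrt (μ i) * Real.sqrt (μ i)) = μ := by
            funext i; exact Real.mul_self_sqrt (hμ0 i)
          rw [this]
      _ = A := hspec.symm
  · intro x
    rw [hform, diag_form, hxx x]
    have : ∀ i : Fin k, c * ((Uᵀ *ᵥ x) i * (Uᵀ *ᵥ x) i) ≤ Real.sqrt (μ i) * ((Uᵀ *ᵥ x) i * (Uᵀ *ᵥ x) i) := by
      intro i
      apply mul_le_mul_of_nonneg_right _ (mul_self_nonneg _)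
      calc c = Real.sqrt (c ^ 2) := (Real.sqrt_sq hc).symm
        _ ≤ Real.sqrt (μ i) := Real.sqrt_le_sqrt (hμlow i)
    calc c * ((Uᵀ *ᵥ x) ⬝ᵥ (Uᵀ *ᵥ x)) = ∑ i, c * ((Uᵀ *ᵥ x) i * (Uᵀ *ᵥ x) i) := by
          simp [dotProduct, Finset.mul_sum]
      _ ≤ ∑ i, Real.sqrt (μ i) * ((Uᵀ *ᵥ x) i * (Uᵀ *ᵥ x) i) := Finset.sum_le_sum fun i _ => this i
  · intro x
    rw [hform, diag_form, hxx x]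
    have : ∀ i : Fin k, Real.sqrt (μ i) * ((Uᵀ *ᵥ x) i * (Uᵀ *ᵥ x) i) ≤ (Uᵀ *ᵥ x) i * (Uᵀ *ᵥ x) i := by
      intro i
      have h1 : Real.sqrt (μ i) ≤ 1 := by
        rw [show (1:ℝ) = Real.sqrt 1 from Real.sqrt_one.symm]
        exact Real.sqrt_le_sqrt (hμup i)
      nlinarith [mul_self_nonneg ((Uᵀ *ᵥ x) i)]
    calc ∑ i, Real.sqrt (μ i) * ((Uᵀ *ᵥ x) i * (Uᵀ *ᵥ x) i)
        ≤ ∑ i, (Uᵀ *ᵥ x) i * (Uᵀ *ᵥ x) i := Finset.sum_le_sum fun i _ => this i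
      _ = (Uᵀ *ᵥ x) ⬝ᵥ (Uᵀ *ᵥ x) := by simp [dotProduct]

end helpers

lemma arccos_anti {x y : ℝ} (h2 : x ≤ y) : Real.arccos y ≤ Real.arccos x := by
  rw [Real.arccos_eq_pi_div_two_sub_arcsin, Real.arccos_eq_pi_div_two_sub_arcsin]
  have := Real.monotone_arcsin h2
  linarith

/-- The angle between two subspaces `V, W` of `ℝ^d` (with `dim V ≤ dim W`): the supremum
over unit vectors `v ∈ V` of the angle between `v` and its orthogonal projection onto `W`. -/
noncomputable def subAngle {d : ℕ} (V W : Submodule ℝ (EuclideanSpace ℝ (Fin d))) : ℝ :=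
  sSup {θ | ∃ v ∈ V, ‖v‖ = 1 ∧
    θ = InnerProductGeometry.angle v
      ((Submodule.orthogonalProjection W v : W) : EuclideanSpace ℝ (Fin d))}

set_option maxHeartbeats 2000000 in
/-- Let `V, W` be `k`-dimensional subspaces of `ℝ^d` with angle
`θ = ∠(V,W) < π/2`.  For every orthonormal basis `v₁,…,v_k` of `V` there is an orthonormal
basis `w₁,…,w_k` of `W` with `∠(vᵢ,wᵢ) ≤ θ` for all `i` and
`∠(vᵢ, wⱼ − vⱼ) ∈ [(π−θ)/2, (π+θ)/2]` for all `i, j`. -/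
theorem stmt2 (d k : ℕ) (V W : Submodule ℝ (EuclideanSpace ℝ (Fin d)))
    (hV : Module.finrank ℝ V = k) (hW : Module.finrank ℝ W = k)
    (θ : ℝ) (hθ : θ = subAngle V W) (hθlt : θ < π / 2)
    (v : Fin k → EuclideanSpace ℝ (Fin d)) (hvon : Orthonormal ℝ v)
    (hvV : Submodule.span ℝ (Set.range v) = V) :
    ∃ w : Fin k → EuclideanSpace ℝ (Fin d), Orthonormal ℝ w ∧
      Submodule.span ℝ (Set.range w) = W ∧
      (∀ i, InnerProductGeometry.angle (v i) (w i) ≤ θ) ∧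
      (∀ i j, InnerProductGeometry.angle (v i) (w j - v j) ∈
        Set.Icc ((π - θ) / 2) ((π + θ) / 2)) := by
  classical
  let E := EuclideanSpace ℝ (Fin d)
  -- θ is nonnegative and an upper bound for all projection angles
  have hbdd : BddAbove {θ' | ∃ x ∈ V, ‖x‖ = 1 ∧
      θ' = InnerProductGeometry.angle x ((Submodule.orthogonalProjection W x : W) : E)} := by
    refine ⟨π, ?_⟩
    rintro a ⟨x, hx, hx1, rfl⟩
    exact InnerProductGeometry.angle_le_pi _ _
  have hθ0 : 0 ≤ θ := by
    rw [hθ]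
    apply Real.sSup_nonneg
    rintro a ⟨x, hx, hx1, rfl⟩
    exact InnerProductGeometry.angle_nonneg _ _
  have hθpi : θ ≤ π := le_trans hθlt.le (by linarith [Real.pi_pos])
  set c := Real.cos θ with hcdef
  have hc1 : c ≤ 1 := Real.cos_le_one θ
  have hc0 : 0 < c := Real.cos_pos_of_mem_Ioo ⟨by linarith [Real.pi_pos], hθlt⟩
  -- orthonormal basis of W
  let u0 : OrthonormalBasis (Fin k) ℝ W := (stdOrthonormalBasis ℝ W).reindex (finCongr hW)
  let u : Fin k → E := fun m => (u0 m : E)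
  have huon : Orthonormal ℝ u := by
    rw [orthonormal_iff_ite]
    intro i j
    rw [show (inner ℝ (u i) (u j) : ℝ) = inner ℝ (u0 i) (u0 j) from (Submodule.coe_inner W _ _).symm]
    exact orthonormal_iff_ite.mp u0.orthonormal i j
  have huW : ∀ m, u m ∈ W := fun m => (u0 m).2
  have hvmem : ∀ i, v i ∈ V := fun i => hvV ▸ Submodule.subset_span (Set.mem_range_self i)
  -- the projection onto W in coordinates
  have hproj : ∀ y : E, ((Submodule.orthogonalProjection W y : W) : E) = ∑ m, (inner ℝ (u m) y : ℝ) • u m := by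
    intro y
    rw [show Submodule.orthogonalProjection W y = W.orthogonalProjectionOnto y from rfl, u0.orthogonalProjectionOnto_apply_eq_sum y]
    push_cast
    rfl
  have hPnorm : ∀ y : E, ‖((Submodule.orthogonalProjection W y : W) : E)‖ ^ 2
      = ∑ m, (inner ℝ (u m) y : ℝ) * (inner ℝ (u m) y : ℝ) := by
    intro y
    rw [← real_inner_self_eq_norm_sq, hproj y]
    have := huon.inner_sum (fun m => (inner ℝ (u m) y : ℝ)) (fun m => (inner ℝ (u m) y : ℝ)) Finset.univ
    simpa using this
  -- angle bound gives norm lower bound for projections of unit vectors of V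
  have hangle : ∀ y : E, y ∈ V → ‖y‖ = 1 → c ≤ ‖((Submodule.orthogonalProjection W y : W) : E)‖ := by
    intro y hy hy1
    set p : E := ((Submodule.orthogonalProjection W y : W) : E) with hp
    have hmem : InnerProductGeometry.angle y p ∈ {θ' | ∃ x ∈ V, ‖x‖ = 1 ∧
        θ' = InnerProductGeometry.angle x ((Submodule.orthogonalProjection W x : W) : E)} :=
      ⟨y, hy, hy1, rfl⟩
    have hα : InnerProductGeometry.angle y p ≤ θ := hθ ▸ le_csSup hbdd hmem
    by_cases hp0 : p = 0
    · rw [hp0, InnerProductGeometry.angle_zero_right] at hα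
      linarith
    · have hyp : (inner ℝ y p : ℝ) = ‖p‖ ^ 2 := by
        have h0 : (inner ℝ (y - p) p : ℝ) = 0 :=
          Submodule.starProjection_inner_eq_zero (K := W) y p (Submodule.orthogonalProjection W y).2
        rw [inner_sub_left] at h0
        have : (inner ℝ y p : ℝ) = inner ℝ p p := by linarith [h0]
        rw [this, real_inner_self_eq_norm_sq]
      have hcos : Real.cos (InnerProductGeometry.angle y p) = ‖p‖ := by
        rw [InnerProductGeometry.cos_angle, hyp, hy1]
        have hpn : ‖p‖ ≠ 0 := norm_ne_zero_iff.mpr hp0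
        field_simp
      calc c ≤ Real.cos (InnerProductGeometry.angle y p) :=
            Real.cos_le_cos_of_nonneg_of_le_pi (InnerProductGeometry.angle_nonneg _ _) hθpi hα
        _ = ‖p‖ := hcos
  -- the matrix B
  set B : Matrix (Fin k) (Fin k) ℝ := Matrix.of (fun m i => (inner ℝ (u m) (v i) : ℝ)) with hB
  have hBx : ∀ x : Fin k → ℝ, ∀ m, (B *ᵥ x) m = (inner ℝ (u m) (∑ i, x i • v i) : ℝ) := by
    intro x m
    rw [inner_sum]
    simp only [real_inner_smul_right]
    simp [Matrix.mulVec, dotProduct, hB, mul_comm]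
  have hAform : ∀ x : Fin k → ℝ,
      x ⬝ᵥ (Bᵀ * B) *ᵥ x = ‖((Submodule.orthogonalProjection W (∑ i, x i • v i) : W) : E)‖ ^ 2 := by
    intro x
    rw [hPnorm, ← Matrix.mulVec_mulVec, Matrix.dotProduct_mulVec, ← Matrix.mulVec_transpose,
      Matrix.transpose_transpose]
    simp only [dotProduct, hBx]
  have hxnorm : ∀ x : Fin k → ℝ, x ⬝ᵥ x = ‖∑ i, x i • v i‖ ^ 2 := by
    intro x
    rw [← real_inner_self_eq_norm_sq]
    have h1 := hvon.inner_sum x x Finset.univ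
    rw [h1]
    simp [dotProduct]
  have hAH : (Bᵀ * B).IsHermitian := by
    have h1 : Bᴴ = Bᵀ := by
      ext i j; simp [Matrix.conjTranspose_apply]
    have := Matrix.isHermitian_conjTranspose_mul_self B
    rwa [h1] at this
  -- upper bound for the quadratic form
  have hup : ∀ x : Fin k → ℝ, x ⬝ᵥ (Bᵀ * B) *ᵥ x ≤ x ⬝ᵥ x := by
    intro x
    rw [hAform, hxnorm]
    have h1 : ‖((Submodule.orthogonalProjection W (∑ i, x i • v i) : W) : E)‖ ≤ ‖∑ i, x i • v i‖ := by
      have h2 := ContinuousLinearMap.le_opNorm (Submodule.orthogonalProjection W) (∑ i, x i • v i)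
      have h3 := Submodule.orthogonalProjectionOnto_norm_le W
      calc ‖((Submodule.orthogonalProjection W (∑ i, x i • v i) : W) : E)‖
          = ‖Submodule.orthogonalProjection W (∑ i, x i • v i)‖ := rfl
        _ ≤ ‖Submodule.orthogonalProjection W‖ * ‖∑ i, x i • v i‖ := h2
        _ ≤ 1 * ‖∑ i, x i • v i‖ := by
            apply mul_le_mul_of_nonneg_right h3 (norm_nonneg _)
        _ = ‖∑ i, x i • v i‖ := one_mul _
    exact pow_le_pow_left₀ (norm_nonneg _) h1 2
  -- lower bound for the quadratic form
  have hlow : ∀ x : Fin k → ℝ, c ^ 2 * (x ⬝ᵥ x) ≤ x ⬝ᵥ (Bᵀ * B) *ᵥ x := by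
    intro x
    by_cases hx0 : x = 0
    · subst hx0
      simp
    · set y : E := ∑ i, x i • v i with hy
      have hyV : y ∈ V := Submodule.sum_mem _ fun i _ => Submodule.smul_mem _ _ (hvmem i)
      have hyn : ‖y‖ ^ 2 = x ⬝ᵥ x := (hxnorm x).symm
      have hyne : y ≠ 0 := by
        intro h0
        apply hx0
        have h1 : x ⬝ᵥ x = 0 := by rw [← hyn, h0]; simp
        have h2 : ∀ i, x i = 0 := by
          intro i
          by_contra hne
          have hpos : 0 < x ⬝ᵥ x := by
            apply Finset.sum_pos' (fun i _ => mul_self_nonneg (x i))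
            exact ⟨i, Finset.mem_univ i, mul_self_pos.mpr hne⟩
          linarith
        funext i; exact h2 i
      have hynpos : 0 < ‖y‖ := norm_pos_iff.mpr hyne
      have hy1 : ‖(‖y‖⁻¹ • y)‖ = 1 := by
        rw [norm_smul, norm_inv, norm_norm, inv_mul_cancel₀ (ne_of_gt hynpos)]
      have hyV1 : (‖y‖⁻¹ • y) ∈ V := Submodule.smul_mem _ _ hyV
      have h1 := hangle _ hyV1 hy1
      have h2 : ((Submodule.orthogonalProjection W (‖y‖⁻¹ • y) : W) : E)
          = ‖y‖⁻¹ • ((Submodule.orthogonalProjection W y : W) : E) := by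
        rw [_root_.map_smul]
        rfl
      rw [h2, norm_smul, norm_inv, norm_norm] at h1
      have h3 : c * ‖y‖ ≤ ‖((Submodule.orthogonalProjection W y : W) : E)‖ := by
        rw [← le_div_iff₀ hynpos]
        calc c ≤ ‖y‖⁻¹ * ‖((Submodule.orthogonalProjection W y : W) : E)‖ := h1
          _ = ‖((Submodule.orthogonalProjection W y : W) : E)‖ / ‖y‖ := by rw [inv_mul_eq_div]
      rw [hAform, ← hyn]
      calc c ^ 2 * ‖y‖ ^ 2 = (c * ‖y‖) ^ 2 := by ring
        _ ≤ ‖((Submodule.orthogonalProjection W y : W) : E)‖ ^ 2 := by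
            apply pow_le_pow_left₀ (by positivity) h3
  obtain ⟨S, hSsym, hSS, hSlow, hSup⟩ := sqrt_matrix (Bᵀ * B) hAH c (le_of_lt hc0) hlow hup
  -- S is invertible
  have hdet : S.det ≠ 0 := by
    intro h0
    obtain ⟨x, hxne, hx0⟩ := (Matrix.exists_mulVec_eq_zero_iff).mpr h0
    have h1 := hSlow x
    rw [hx0] at h1
    simp only [dotProduct_zero] at h1
    have h2 : 0 < x ⬝ᵥ x := by
      apply Finset.sum_pos' (fun i _ => mul_self_nonneg (x i))
      obtain ⟨i, hi⟩ := Function.ne_iff.mp hxne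
      exact ⟨i, Finset.mem_univ i, mul_self_pos.mpr hi⟩
    nlinarith
  have hdetU : IsUnit S.det := isUnit_iff_ne_zero.mpr hdet
  have hSinv : S * S⁻¹ = 1 := Matrix.mul_nonsing_inv S hdetU
  have hSinv' : S⁻¹ * S = 1 := Matrix.nonsing_inv_mul S hdetU
  set Q : Matrix (Fin k) (Fin k) ℝ := B * S⁻¹ with hQ
  have hBtQ : Bᵀ * Q = S := by
    calc Bᵀ * (B * S⁻¹) = (Bᵀ * B) * S⁻¹ := by rw [Matrix.mul_assoc]
      _ = (S * S) * S⁻¹ := by rw [hSS]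
      _ = S * (S * S⁻¹) := by rw [Matrix.mul_assoc]
      _ = S := by rw [hSinv, mul_one]
  have hQtQ : Qᵀ * Q = 1 := by
    have hQt : Qᵀ = S⁻¹ * Bᵀ := by
      rw [hQ, Matrix.transpose_mul, Matrix.transpose_nonsing_inv, hSsym]
    calc Qᵀ * Q = S⁻¹ * (Bᵀ * Q) := by rw [hQt, Matrix.mul_assoc]
      _ = S⁻¹ * S := by rw [hBtQ]
      _ = 1 := hSinv'
  -- define w
  set w : Fin k → E := fun j => ∑ m, Q m j • u m with hwdef
  have hwon : Orthonormal ℝ w := by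
    rw [orthonormal_iff_ite]
    intro i j
    have h1 := huon.inner_sum (fun m => Q m i) (fun m => Q m j) Finset.univ
    rw [hwdef]
    simp only []
    rw [h1]
    have h2 : ∑ m, (starRingEnd ℝ) (Q m i) * Q m j = (Qᵀ * Q) i j := by
      simp [Matrix.mul_apply, Matrix.transpose_apply]
    rw [h2, hQtQ, Matrix.one_apply]
  have hwW : ∀ j, w j ∈ W := fun j =>
    Submodule.sum_mem _ fun m _ => Submodule.smul_mem _ _ (huW m)
  have hspan : Submodule.span ℝ (Set.range w) = W := by
    have hle : Submodule.span ℝ (Set.range w) ≤ W := by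
      rw [Submodule.span_le]
      rintro z ⟨j, rfl⟩
      exact hwW j
    apply Submodule.eq_of_le_of_finrank_le hle
    rw [hW, finrank_span_eq_card hwon.linearIndependent]
    simp
  -- inner ℝ products
  have hvw : ∀ i j, (inner ℝ (v i) (w j) : ℝ) = S i j := by
    intro i j
    rw [hwdef]
    simp only []
    rw [inner_sum]
    simp only [real_inner_smul_right]
    have h1 : ∑ m, Q m j * (inner ℝ (v i) (u m) : ℝ) = (Bᵀ * Q) i j := by
      simp only [Matrix.mul_apply, Matrix.transpose_apply, hB, Matrix.of_apply]
      exact Finset.sum_congr rfl fun m _ => by rw [real_inner_comm]; ring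
    rw [h1, hBtQ]
  -- diagonal entry bounds
  have hSd_low : ∀ i, c ≤ S i i := by
    intro i
    have h1 := hSlow (Pi.single i 1)
    rw [entry_eq, single_self] at h1
    linarith
  have hSd_up : ∀ i, S i i ≤ 1 := by
    intro i
    have h1 := hSup (Pi.single i 1)
    rw [entry_eq, single_self] at h1
    linarith
  set N : Matrix (Fin k) (Fin k) ℝ := 1 - S with hN
  have hNsym : Nᵀ = N := by rw [hN, Matrix.transpose_sub, Matrix.transpose_one, hSsym]
  have hNpos : ∀ x : Fin k → ℝ, 0 ≤ x ⬝ᵥ N *ᵥ x := by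
    intro x
    rw [hN, Matrix.sub_mulVec, dotProduct_sub, Matrix.one_mulVec]
    linarith [hSup x]
  have hNentry : ∀ i j, N i j = (if i = j then (1:ℝ) else 0) - S i j := by
    intro i j
    rw [hN]
    simp [Matrix.sub_apply, Matrix.one_apply]
  have hNsq : ∀ i j, (N i j)^2 ≤ N i i * N j j := psd_entry_sq_le N hNpos hNsym
  have hNd_up : ∀ i, N i i ≤ 1 - c := by
    intro i
    have h1 := hSd_low i
    rw [hNentry]
    simp only [eq_self_iff_true, if_true]
    linarith
  -- norms
  have hv1 : ∀ i, ‖v i‖ = 1 := fun i => hvon.1 i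
  have hw1 : ∀ i, ‖w i‖ = 1 := fun i => hwon.1 i
  have hdiff : ∀ j, ‖w j - v j‖ ^ 2 = 2 * N j j := by
    intro j
    rw [norm_sub_sq_real, real_inner_comm, hvw, hw1, hv1, hNentry]
    norm_num
    ring
  have hvwd : ∀ i j, (inner ℝ (v i) (w j - v j) : ℝ) = - N i j := by
    intro i j
    rw [inner_sub_right, hvw, hNentry]
    have h1 := orthonormal_iff_ite.mp hvon i j
    rw [h1]
    by_cases hij : i = j <;> simp [hij]
  -- condition 1
  have cond1 : ∀ i, InnerProductGeometry.angle (v i) (w i) ≤ θ := by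
    intro i
    have hcos : (inner ℝ (v i) (w i) : ℝ) / (‖v i‖ * ‖w i‖) = S i i := by
      rw [hvw, hv1, hw1]
      norm_num
    rw [InnerProductGeometry.angle, hcos]
    calc Real.arccos (S i i) ≤ Real.arccos c := arccos_anti (hSd_low i)
      _ = θ := by rw [hcdef, Real.arccos_cos hθ0 hθpi]
  -- condition 2
  have cond2 : ∀ i j, InnerProductGeometry.angle (v i) (w j - v j) ∈
      Set.Icc ((π - θ) / 2) ((π + θ) / 2) := by
    intro i j
    have hsin0 : 0 ≤ Real.sin (θ/2) :=
      Real.sin_nonneg_of_nonneg_of_le_pi (by linarith) (by linarith [Real.pi_pos])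
    have hsin : Real.sin (θ/2) = Real.sqrt ((1-c)/2) :=
      Real.sin_half_eq_sqrt hθ0 (by linarith [Real.pi_pos])
    have hcos1 : Real.cos ((π - θ)/2) = Real.sin (θ/2) := by
      rw [show (π-θ)/2 = π/2 - θ/2 by ring, Real.cos_pi_div_two_sub]
    have hcos2 : Real.cos ((π + θ)/2) = -Real.sin (θ/2) := by
      rw [show (π+θ)/2 = π/2 - -(θ/2) by ring, Real.cos_pi_div_two_sub, Real.sin_neg]
    by_cases h0 : w j - v j = 0
    · rw [h0, InnerProductGeometry.angle_zero_right]
      constructor <;> linarith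
    · have hnpos : 0 < ‖w j - v j‖ := norm_pos_iff.mpr h0
      have hNjj : 0 < N j j := by
        have h1 := hdiff j
        nlinarith
      set q := (inner ℝ (v i) (w j - v j) : ℝ) / (‖v i‖ * ‖w j - v j‖) with hq
      have hq2 : q^2 ≤ Real.sin (θ/2)^2 := by
        rw [hsin, Real.sq_sqrt (by linarith : (0:ℝ) ≤ (1-c)/2)]
        rw [hq, hv1, one_mul, div_pow, hdiff j, hvwd]
        rw [div_le_div_iff₀ (by positivity) (by norm_num : (0:ℝ) < 2)]
        have hb : (N i j)^2 ≤ (1-c) * N j j :=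
          le_trans (hNsq i j) (mul_le_mul_of_nonneg_right (hNd_up i) (le_of_lt hNjj))
        nlinarith
      have habs : |q| ≤ Real.sin (θ/2) := by
        have h1 := Real.sqrt_le_sqrt hq2
        rwa [Real.sqrt_sq_eq_abs, Real.sqrt_sq hsin0] at h1
      have hql : -Real.sin (θ/2) ≤ q := neg_le_of_abs_le habs
      have hqu : q ≤ Real.sin (θ/2) := le_of_abs_le habs
      have hq1 : -1 ≤ q := le_trans (by linarith [Real.sin_le_one (θ/2)]) hql
      rw [InnerProductGeometry.angle]
      constructor
      · have h1 : Real.arccos (Real.cos ((π - θ)/2)) ≤ Real.arccos q := by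
          apply arccos_anti
          rw [hcos1]
          exact hqu
        rwa [Real.arccos_cos (by linarith) (by linarith)] at h1
      · have h1 : Real.arccos q ≤ Real.arccos (Real.cos ((π + θ)/2)) := by
          apply arccos_anti
          rw [hcos2]
          exact hql
        rwa [Real.arccos_cos (by linarith) (by linarith)] at h1
  exact ⟨w, hwon, hspan, cond1, cond2⟩
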